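/- arXiv:1603.07618 — 2 statements merged into one kernel-verified Lean document; each statement's English description precedes it below -/
import Mathlib

section
/- Fix c > 1 and let b(x,w,v) = x²·w·φ(wv), where φ(t) = 2 − 1/t − (ln t)/(2c). Then for every point (x,w,v) ∈ ℝ × (0,∞) × (0,∞) with 1 ≤ wv ≤ c, the symmetric 3×3 matrix 𝔸(x,w,v) = D²b(x,w,v) − diag(80cw, 0, 0) (the Hessian of b in the variables (x,w,v) minus the diagonal matrix with entries 80cw, 0, 0) is negative semidefinite; equivalently, (𝔸(x,w,v)Δ, Δ) ≤ 0 for every vector Δ ∈ ℝ³. -/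
/-- `b(x,w,v) = x² w φ(wv)` with `φ(t) = 2 - 1/t - (ln t)/(2c)`. -/
noncomputable def bFun (c : ℝ) : ℝ × ℝ × ℝ → ℝ := fun q =>
  q.1 ^ 2 * q.2.1 * (2 - 1 / (q.2.1 * q.2.2) - Real.log (q.2.1 * q.2.2) / (2 * c))

namespace BFunAux

noncomputable def P1 : ℝ × ℝ × ℝ →L[ℝ] ℝ := ContinuousLinearMap.fst ℝ ℝ (ℝ × ℝ)
noncomputable def P2 : ℝ × ℝ × ℝ →L[ℝ] ℝ :=
  (ContinuousLinearMap.fst ℝ ℝ ℝ).comp (ContinuousLinearMap.snd ℝ ℝ (ℝ × ℝ))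
noncomputable def P3 : ℝ × ℝ × ℝ →L[ℝ] ℝ :=
  (ContinuousLinearMap.snd ℝ ℝ ℝ).comp (ContinuousLinearMap.snd ℝ ℝ (ℝ × ℝ))

noncomputable def bx (c : ℝ) (y : ℝ × ℝ × ℝ) : ℝ :=
  2 * y.1 * (2 * y.2.1 - 1 / y.2.2 - y.2.1 * Real.log (y.2.1 * y.2.2) / (2 * c))
noncomputable def bw (c : ℝ) (y : ℝ × ℝ × ℝ) : ℝ :=
  y.1 ^ 2 * (2 - (Real.log (y.2.1 * y.2.2) + 1) / (2 * c))
noncomputable def bv (c : ℝ) (y : ℝ × ℝ × ℝ) : ℝ :=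
  y.1 ^ 2 * (1 / y.2.2 ^ 2 - y.2.1 / (2 * c * y.2.2))

noncomputable def gradCLM (c : ℝ) (y : ℝ × ℝ × ℝ) : ℝ × ℝ × ℝ →L[ℝ] ℝ :=
  bx c y • P1 + bw c y • P2 + bv c y • P3

noncomputable def bxx (c : ℝ) (p : ℝ × ℝ × ℝ) : ℝ :=
  2 * (2 * p.2.1 - 1 / p.2.2 - p.2.1 * Real.log (p.2.1 * p.2.2) / (2 * c))
noncomputable def bxw (c : ℝ) (p : ℝ × ℝ × ℝ) : ℝ :=
  2 * p.1 * (2 - (Real.log (p.2.1 * p.2.2) + 1) / (2 * c))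
noncomputable def bxv (c : ℝ) (p : ℝ × ℝ × ℝ) : ℝ :=
  2 * p.1 * (1 / p.2.2 ^ 2 - p.2.1 / (2 * c * p.2.2))
noncomputable def bww (c : ℝ) (p : ℝ × ℝ × ℝ) : ℝ := -p.1 ^ 2 / (2 * c * p.2.1)
noncomputable def bwv (c : ℝ) (p : ℝ × ℝ × ℝ) : ℝ := -p.1 ^ 2 / (2 * c * p.2.2)
noncomputable def bvv (c : ℝ) (p : ℝ × ℝ × ℝ) : ℝ :=
  p.1 ^ 2 * (p.2.1 / (2 * c * p.2.2 ^ 2) - 2 / p.2.2 ^ 3)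

noncomputable def hess (c : ℝ) (p Δ : ℝ × ℝ × ℝ) : ℝ × ℝ × ℝ →L[ℝ] ℝ :=
  (bxx c p * Δ.1 + bxw c p * Δ.2.1 + bxv c p * Δ.2.2) • P1 +
  (bxw c p * Δ.1 + bww c p * Δ.2.1 + bwv c p * Δ.2.2) • P2 +
  (bxv c p * Δ.1 + bwv c p * Δ.2.1 + bvv c p * Δ.2.2) • P3

lemma hasFDerivAt_bFun (c : ℝ) (hc : c ≠ 0) (y : ℝ × ℝ × ℝ)
    (hw : 0 < y.2.1) (hv : 0 < y.2.2) :
    HasFDerivAt (bFun c) (gradCLM c y) y := by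
  have htpos : 0 < y.2.1 * y.2.2 := mul_pos hw hv
  have htne : y.2.1 * y.2.2 ≠ 0 := ne_of_gt htpos
  have h1 : HasFDerivAt (fun q : ℝ × ℝ × ℝ => q.1) P1 y := hasFDerivAt_fst
  have h2 : HasFDerivAt (fun q : ℝ × ℝ × ℝ => q.2.1)
      ((ContinuousLinearMap.fst ℝ ℝ ℝ).comp (ContinuousLinearMap.snd ℝ ℝ (ℝ × ℝ))) y :=
    hasFDerivAt_snd.fst
  have h3 : HasFDerivAt (fun q : ℝ × ℝ × ℝ => q.2.2)
      ((ContinuousLinearMap.snd ℝ ℝ ℝ).comp (ContinuousLinearMap.snd ℝ ℝ (ℝ × ℝ))) y :=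
    hasFDerivAt_snd.snd
  have ht := h2.mul h3
  have hlog := ht.log htne
  have hinv := (hasDerivAt_inv htne).comp_hasFDerivAt y ht
  have hx2 := (hasDerivAt_pow 2 y.1).comp_hasFDerivAt y h1
  simp only [Function.comp_def] at hinv hx2
  have hmain := (hx2.mul h2).mul
    ((((hasFDerivAt_const (2:ℝ) y).sub hinv).sub (hlog.mul_const (2*c)⁻¹)))
  have hfe : (fun q : ℝ × ℝ × ℝ =>
      q.1 ^ 2 * q.2.1 * (2 - (q.2.1 * q.2.2)⁻¹ - Real.log (q.2.1 * q.2.2) * (2 * c)⁻¹)) =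
      bFun c := by
    funext q; simp [bFun, one_div, div_eq_mul_inv]
  replace hmain := hmain.congr_of_eventuallyEq (f₁ := bFun c)
    (Filter.Eventually.of_forall fun q => (congrFun hfe q).symm)
  refine hmain.congr_fderiv (Eq.symm ?_)
  refine ContinuousLinearMap.ext fun u => ?_
  simp only [gradCLM, bx, bw, bv, P1, P2, P3, ContinuousLinearMap.add_apply,
    ContinuousLinearMap.smul_apply, ContinuousLinearMap.comp_apply,
    ContinuousLinearMap.coe_fst', ContinuousLinearMap.coe_snd',
    ContinuousLinearMap.sub_apply, ContinuousLinearMap.zero_apply, smul_eq_mul,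
    ContinuousLinearMap.coe_smul', Pi.smul_apply, Pi.mul_apply, Pi.sub_apply, Pi.add_apply]
  field_simp
  ring

set_option maxHeartbeats 1000000 in
lemma hasFDerivAt_gradApply (c : ℝ) (hc : c ≠ 0) (p Δ : ℝ × ℝ × ℝ)
    (hw : 0 < p.2.1) (hv : 0 < p.2.2) :
    HasFDerivAt (fun y => gradCLM c y Δ) (hess c p Δ) p := by
  have htpos : 0 < p.2.1 * p.2.2 := mul_pos hw hv
  have htne : p.2.1 * p.2.2 ≠ 0 := ne_of_gt htpos
  have h1 : HasFDerivAt (fun q : ℝ × ℝ × ℝ => q.1) P1 p := hasFDerivAt_fst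
  have h2 : HasFDerivAt (fun q : ℝ × ℝ × ℝ => q.2.1)
      ((ContinuousLinearMap.fst ℝ ℝ ℝ).comp (ContinuousLinearMap.snd ℝ ℝ (ℝ × ℝ))) p :=
    hasFDerivAt_snd.fst
  have h3 : HasFDerivAt (fun q : ℝ × ℝ × ℝ => q.2.2)
      ((ContinuousLinearMap.snd ℝ ℝ ℝ).comp (ContinuousLinearMap.snd ℝ ℝ (ℝ × ℝ))) p :=
    hasFDerivAt_snd.snd
  have ht := h2.mul h3
  have hlog := ht.log htne
  have hinvV := (hasDerivAt_inv hv.ne').comp_hasFDerivAt p h3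
  have hV2 := (hasDerivAt_pow 2 p.2.2).comp_hasFDerivAt p h3
  simp only [Function.comp_def] at hinvV hV2
  have hinvV2 := (hasDerivAt_inv (pow_ne_zero 2 hv.ne')).comp_hasFDerivAt p hV2
  have hx2 := (hasDerivAt_pow 2 p.1).comp_hasFDerivAt p h1
  simp only [Function.comp_def] at hinvV2 hx2
  have hbx := (h1.const_mul 2).mul
    (((h2.const_mul 2).sub hinvV).sub (h2.mul (hlog.mul_const (2*c)⁻¹)))
  have hbw := hx2.mul ((hasFDerivAt_const (2:ℝ) p).sub ((hlog.add_const 1).mul_const (2*c)⁻¹))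
  have hbv := hx2.mul (hinvV2.sub ((h2.mul_const (2*c)⁻¹).mul hinvV))
  have hmain := ((hbx.mul_const Δ.1).add (hbw.mul_const Δ.2.1)).add (hbv.mul_const Δ.2.2)
  have hfe : (fun y : ℝ × ℝ × ℝ =>
      2 * y.1 * (2 * y.2.1 - (y.2.2)⁻¹ - y.2.1 * (Real.log (y.2.1 * y.2.2) * (2*c)⁻¹)) * Δ.1 +
      y.1 ^ 2 * (2 - (Real.log (y.2.1 * y.2.2) + 1) * (2*c)⁻¹) * Δ.2.1 +
      y.1 ^ 2 * ((y.2.2 ^ 2)⁻¹ - y.2.1 * (2*c)⁻¹ * (y.2.2)⁻¹) * Δ.2.2) =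
      (fun y => gradCLM c y Δ) := by
    funext q
    simp only [gradCLM, bx, bw, bv, P1, P2, P3, ContinuousLinearMap.add_apply,
      ContinuousLinearMap.smul_apply, ContinuousLinearMap.comp_apply,
      ContinuousLinearMap.coe_fst', ContinuousLinearMap.coe_snd', smul_eq_mul,
      div_eq_mul_inv, mul_inv]
    ring
  replace hmain := hmain.congr_of_eventuallyEq (f₁ := fun y => gradCLM c y Δ)
    (Filter.Eventually.of_forall fun q => (congrFun hfe q).symm)
  refine hmain.congr_fderiv (Eq.symm ?_)
  refine ContinuousLinearMap.ext fun u => ?_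
  simp only [hess, bxx, bxw, bxv, bww, bwv, bvv, P1, P2, P3, ContinuousLinearMap.add_apply,
    ContinuousLinearMap.smul_apply, ContinuousLinearMap.comp_apply,
    ContinuousLinearMap.coe_fst', ContinuousLinearMap.coe_snd',
    ContinuousLinearMap.sub_apply, ContinuousLinearMap.zero_apply, smul_eq_mul,
    ContinuousLinearMap.coe_smul', Pi.smul_apply, Pi.mul_apply, Pi.sub_apply, Pi.add_apply]
  field_simp
  ring

lemma differentiableAt_grad (c : ℝ) (p : ℝ × ℝ × ℝ)
    (hw : 0 < p.2.1) (hv : 0 < p.2.2) :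
    DifferentiableAt ℝ (gradCLM c) p := by
  have htne : p.2.1 * p.2.2 ≠ 0 := ne_of_gt (mul_pos hw hv)
  have h1 : HasFDerivAt (fun q : ℝ × ℝ × ℝ => q.1) P1 p := hasFDerivAt_fst
  have h2 : HasFDerivAt (fun q : ℝ × ℝ × ℝ => q.2.1)
      ((ContinuousLinearMap.fst ℝ ℝ ℝ).comp (ContinuousLinearMap.snd ℝ ℝ (ℝ × ℝ))) p :=
    hasFDerivAt_snd.fst
  have h3 : HasFDerivAt (fun q : ℝ × ℝ × ℝ => q.2.2)
      ((ContinuousLinearMap.snd ℝ ℝ ℝ).comp (ContinuousLinearMap.snd ℝ ℝ (ℝ × ℝ))) p :=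
    hasFDerivAt_snd.snd
  have ht := h2.mul h3
  have hlog := ht.log htne
  have hinvV := (hasDerivAt_inv hv.ne').comp_hasFDerivAt p h3
  have hV2 := (hasDerivAt_pow 2 p.2.2).comp_hasFDerivAt p h3
  simp only [Function.comp_def] at hinvV hV2
  have hinvV2 := (hasDerivAt_inv (pow_ne_zero 2 hv.ne')).comp_hasFDerivAt p hV2
  have hx2 := (hasDerivAt_pow 2 p.1).comp_hasFDerivAt p h1
  simp only [Function.comp_def] at hinvV2 hx2
  have hbx := (h1.const_mul 2).mul
    (((h2.const_mul 2).sub hinvV).sub (h2.mul (hlog.mul_const (2*c)⁻¹)))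
  have hbw := hx2.mul ((hasFDerivAt_const (2:ℝ) p).sub ((hlog.add_const 1).mul_const (2*c)⁻¹))
  have hbv := hx2.mul (hinvV2.sub ((h2.mul_const (2*c)⁻¹).mul hinvV))
  have ebx : (fun y : ℝ × ℝ × ℝ =>
      2 * y.1 * (2 * y.2.1 - (y.2.2)⁻¹ - y.2.1 * (Real.log (y.2.1 * y.2.2) * (2*c)⁻¹))) = bx c := by
    funext q; simp only [bx, div_eq_mul_inv, one_div]; ring
  have ebw : (fun y : ℝ × ℝ × ℝ =>
      y.1 ^ 2 * (2 - (Real.log (y.2.1 * y.2.2) + 1) * (2*c)⁻¹)) = bw c := by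
    funext q; simp only [bw, div_eq_mul_inv, one_div]
  have ebv : (fun y : ℝ × ℝ × ℝ =>
      y.1 ^ 2 * ((y.2.2 ^ 2)⁻¹ - y.2.1 * (2*c)⁻¹ * (y.2.2)⁻¹)) = bv c := by
    funext q; simp only [bv, div_eq_mul_inv, one_div, mul_inv]; ring
  replace hbx := hbx.congr_of_eventuallyEq (f₁ := bx c)
    (Filter.Eventually.of_forall fun q => (congrFun ebx q).symm)
  replace hbw := hbw.congr_of_eventuallyEq (f₁ := bw c)
    (Filter.Eventually.of_forall fun q => (congrFun ebw q).symm)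
  replace hbv := hbv.congr_of_eventuallyEq (f₁ := bv c)
    (Filter.Eventually.of_forall fun q => (congrFun ebv q).symm)
  exact ((hbx.differentiableAt.smul_const P1).add
    (hbw.differentiableAt.smul_const P2)).add (hbv.differentiableAt.smul_const P3)

set_option maxHeartbeats 2000000 in
lemma quad_nonpos (c x w v a b e L : ℝ) (hc : 1 < c) (hw : 0 < w) (hv : 0 < v)
    (h1 : 1 ≤ w * v) (h2 : w * v ≤ c) (hL0 : 0 ≤ L) (hL1 : L ≤ w * v - 1) :
    ((2*(2*w - 1/v - w*L/(2*c)))*a + (2*x*(2 - (L+1)/(2*c)))*b + (2*x*(1/v^2 - w/(2*c*v)))*e)*a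
  + ((2*x*(2 - (L+1)/(2*c)))*a + (-x^2/(2*c*w))*b + (-x^2/(2*c*v))*e)*b
  + ((2*x*(1/v^2 - w/(2*c*v)))*a + (-x^2/(2*c*v))*b + (x^2*(w/(2*c*v^2) - 2/v^3))*e)*e
  - 80*c*w*a^2 ≤ 0 := by
  have hc0 : (0:ℝ) < c := by linarith
  have hM : (0:ℝ) < 2*c*w*v^3 := by positivity
  obtain ⟨s, hs⟩ : ∃ s : ℝ, s = 2 - (L+1)/(2*c) := ⟨_, rfl⟩
  obtain ⟨g, hg⟩ : ∃ g : ℝ, g = 1 - 2*(w*v) + w*v*L/(2*c) := ⟨_, rfl⟩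
  rw [show ((2*(2*w - 1/v - w*L/(2*c)))*a + (2*x*(2 - (L+1)/(2*c)))*b + (2*x*(1/v^2 - w/(2*c*v)))*e)*a
  + ((2*x*(2 - (L+1)/(2*c)))*a + (-x^2/(2*c*w))*b + (-x^2/(2*c*v))*e)*b
  + ((2*x*(1/v^2 - w/(2*c*v)))*a + (-x^2/(2*c*v))*b + (x^2*(w/(2*c*v^2) - 2/v^3))*e)*e
  - 80*c*w*a^2
    = (2*c*w*v^3 * (((2*(2*w - 1/v - w*L/(2*c)))*a + (2*x*(2 - (L+1)/(2*c)))*b + (2*x*(1/v^2 - w/(2*c*v)))*e)*a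
  + ((2*x*(2 - (L+1)/(2*c)))*a + (-x^2/(2*c*w))*b + (-x^2/(2*c*v))*e)*b
  + ((2*x*(1/v^2 - w/(2*c*v)))*a + (-x^2/(2*c*v))*b + (x^2*(w/(2*c*v^2) - 2/v^3))*e)*e
  - 80*c*w*a^2)) / (2*c*w*v^3) from by field_simp]
  apply div_nonpos_of_nonpos_of_nonneg _ hM.le
  have hident : 2*c*w*v^3 * (((2*(2*w - 1/v - w*L/(2*c)))*a + (2*x*(2 - (L+1)/(2*c)))*b + (2*x*(1/v^2 - w/(2*c*v)))*e)*a
  + ((2*x*(2 - (L+1)/(2*c)))*a + (-x^2/(2*c*w))*b + (-x^2/(2*c*v))*e)*b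
  + ((2*x*(1/v^2 - w/(2*c*v)))*a + (-x^2/(2*c*v))*b + (x^2*(w/(2*c*v^2) - 2/v^3))*e)*e
  - 80*c*w*a^2)
      = -(v*(x*(v*b + w*e) - 4*c*w*v*s*a)^2) - 2*c*w*(x*e - 2*v*g*a)^2
        + (8*c*w^2*v^3 - 4*c*w*v^2 - 2*w^2*v^3*L + 16*c^2*w^2*v^3*s^2 + 8*c*w*v^2*g^2
            - 160*c^2*w^2*v^3)*a^2
        + 2*w*(w*v - c)*x^2*e^2 := by
    subst hs hg; field_simp; ring
  rw [hident]
  have hwv : (0:ℝ) < w * v := mul_pos hw hv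
  have hs0 : (3:ℝ)/2 ≤ s := by
    rw [hs]
    have hle : (L+1)/(2*c) ≤ 1/2 := by
      rw [div_le_iff₀ (by positivity)]; linarith
    linarith
  have hs2 : s ≤ 2 := by
    rw [hs]
    have : 0 ≤ (L+1)/(2*c) := by positivity
    linarith
  have hs4 : s^2 ≤ 4 := by nlinarith
  have htL : w*v*L/(2*c) ≤ (w*v)/2 := by
    rw [div_le_div_iff₀ (by positivity) (by norm_num)]
    nlinarith [mul_le_mul_of_nonneg_left (show L ≤ c by linarith) hwv.le]
  have hgu : g ≤ 2*(w*v) := by rw [hg]; linarith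
  have hgl : -(2*(w*v)) ≤ g := by
    rw [hg]
    have : 0 ≤ w*v*L/(2*c) := by positivity
    linarith
  have hg4 : g^2 ≤ 4*(w*v)^2 := by nlinarith
  have hA1 : 16*c^2*w^2*v^3*s^2 ≤ 64*c^2*w^2*v^3 := by
    nlinarith [mul_le_mul_of_nonneg_left hs4 (show (0:ℝ) ≤ 16*c^2*w^2*v^3 by positivity)]
  have hA2 : 8*c*w*v^2*g^2 ≤ 32*c^2*w^2*v^3 := by
    nlinarith [mul_le_mul_of_nonneg_left hg4 (show (0:ℝ) ≤ 8*c*w*v^2 by positivity),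
      mul_le_mul_of_nonneg_left h2 (show (0:ℝ) ≤ 32*c*w^2*v^3 by positivity)]
  have h8 : 8*c*w^2*v^3 ≤ 8*c^2*w^2*v^3 := by
    nlinarith [mul_nonneg (show (0:ℝ) ≤ 8*c*w^2*v^3 by positivity) (show (0:ℝ) ≤ c - 1 by linarith)]
  have hA : (8*c*w^2*v^3 - 4*c*w*v^2 - 2*w^2*v^3*L + 16*c^2*w^2*v^3*s^2 + 8*c*w*v^2*g^2
      - 160*c^2*w^2*v^3) ≤ 0 := by
    have hLpos : 0 ≤ 2*w^2*v^3*L := by positivity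
    have : (0:ℝ) ≤ 4*c*w*v^2 := by positivity
    have : (0:ℝ) ≤ c^2*w^2*v^3 := by positivity
    linarith
  have t3 : (8*c*w^2*v^3 - 4*c*w*v^2 - 2*w^2*v^3*L + 16*c^2*w^2*v^3*s^2 + 8*c*w*v^2*g^2
      - 160*c^2*w^2*v^3)*a^2 ≤ 0 := mul_nonpos_of_nonpos_of_nonneg hA (sq_nonneg a)
  have t1 : 0 ≤ v*(x*(v*b + w*e) - 4*c*w*v*s*a)^2 := mul_nonneg hv.le (sq_nonneg _)
  have t2 : 0 ≤ 2*c*w*(x*e - 2*v*g*a)^2 := mul_nonneg (by positivity) (sq_nonneg _)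
  have t4 : 2*w*(w*v - c)*x^2*e^2 ≤ 0 := by
    have h4a : 0 ≤ 2*w*(c - w*v)*x^2*e^2 := by
      have : (0:ℝ) ≤ c - w*v := by linarith
      positivity
    nlinarith [h4a]
  linarith

end BFunAux

open BFunAux
/-- On the region `1 ≤ wv ≤ c`, the matrix `𝔸(x,w,v) = D²b(x,w,v) - diag(80cw, 0, 0)` is
negative semidefinite: its quadratic form is nonpositive on every vector `Δ ∈ ℝ³`. -/
theorem bFun_matrix_nonpositive (c : ℝ) (hc : 1 < c) (x w v : ℝ)
    (hw : 0 < w) (hv : 0 < v) (h1 : 1 ≤ w * v) (h2 : w * v ≤ c)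
    (Δ : ℝ × ℝ × ℝ) :
    (iteratedFDeriv ℝ 2 (bFun c) (x, w, v)) ![Δ, Δ] - 80 * c * w * Δ.1 ^ 2 ≤ 0 := by
  have hc0 : (0:ℝ) < c := by linarith
  have hcne : c ≠ 0 := ne_of_gt hc0
  have hwp : (0:ℝ) < ((x, w, v) : ℝ × ℝ × ℝ).2.1 := hw
  have hvp : (0:ℝ) < ((x, w, v) : ℝ × ℝ × ℝ).2.2 := hv
  have hopenS : IsOpen {y : ℝ × ℝ × ℝ | 0 < y.2.1 ∧ 0 < y.2.2} := by
    exact (isOpen_lt continuous_const (continuous_fst.comp continuous_snd)).inter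
      (isOpen_lt continuous_const (continuous_snd.comp continuous_snd))
  have hmem : ((x, w, v) : ℝ × ℝ × ℝ) ∈ {y : ℝ × ℝ × ℝ | 0 < y.2.1 ∧ 0 < y.2.2} := ⟨hw, hv⟩
  have hEq : fderiv ℝ (bFun c) =ᶠ[nhds ((x, w, v) : ℝ × ℝ × ℝ)] gradCLM c := by
    filter_upwards [hopenS.eventually_mem hmem] with y hy
    exact (hasFDerivAt_bFun c hcne y hy.1 hy.2).fderiv
  have hdiff : DifferentiableAt ℝ (gradCLM c) (x, w, v) := differentiableAt_grad c _ hwp hvp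
  have hflip : fderiv ℝ (fun y => gradCLM c y Δ) (x, w, v)
      = (fderiv ℝ (gradCLM c) (x, w, v)).flip Δ := by
    rw [fderiv_clm_apply hdiff (differentiableAt_const Δ)]
    simp
  have hfd : fderiv ℝ (fun y => gradCLM c y Δ) (x, w, v) = hess c (x, w, v) Δ :=
    (hasFDerivAt_gradApply c hcne (x, w, v) Δ hwp hvp).fderiv
  have hQ : (iteratedFDeriv ℝ 2 (bFun c) (x, w, v)) ![Δ, Δ] = hess c (x, w, v) Δ Δ := by
    rw [iteratedFDeriv_two_apply]
    simp only [Matrix.cons_val_zero, Matrix.cons_val_one, Matrix.head_cons]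
    rw [hEq.fderiv_eq]
    rw [← hfd, hflip]
    simp [ContinuousLinearMap.flip_apply]
  rw [hQ]
  have hL0 : 0 ≤ Real.log (w * v) := Real.log_nonneg h1
  have hL1 : Real.log (w * v) ≤ w * v - 1 :=
    Real.log_le_sub_one_of_pos (mul_pos hw hv)
  have := quad_nonpos c x w v Δ.1 Δ.2.1 Δ.2.2 (Real.log (w * v)) hc hw hv h1 h2 hL0 hL1
  simp only [hess, bxx, bxw, bxv, bww, bwv, bvv, P1, P2, P3, ContinuousLinearMap.add_apply,
    ContinuousLinearMap.smul_apply, ContinuousLinearMap.comp_apply,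
    ContinuousLinearMap.coe_fst', ContinuousLinearMap.coe_snd', smul_eq_mul]
  linarith [this]
end

section
/- Let c > 1 and r ∈ (1,2]. Suppose that points P, Q ∈ (0,∞)² and their midpoint R = (P + Q)/2 all lie in the domain Ω_c^r. Then the whole line segment joining P and Q is contained in Ω_{2c}^r. -/
open Real

private theorem maxmax_le (p c x X y Y : ℝ) (hp0 : 0 < p) (hp1 : p ≤ 1) (hc : 0 < c)
    (hX : 0 < X) (hy : 0 ≤ y) (hY : 0 < Y)
    (h1 : x * X ^ p ≤ c) (h2 : y * Y ^ p ≤ c)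
    (hxy : x ≤ 2 * y) (hXY : X ≤ 2 * Y) :
    max x y * max X Y ^ p ≤ 2 * c := by
  have h2p : (2:ℝ) ^ p ≤ 2 := by
    calc (2:ℝ) ^ p ≤ 2 ^ (1:ℝ) := by
          apply Real.rpow_le_rpow_of_exponent_le (by norm_num) hp1
      _ = 2 := by norm_num
  rcases max_cases x y with ⟨hm, hxy'⟩ | ⟨hm, hxy'⟩ <;>
    rcases max_cases X Y with ⟨hM, hXY'⟩ | ⟨hM, hXY'⟩ <;> rw [hm, hM]
  · linarith
  · calc x * Y ^ p ≤ (2 * y) * Y ^ p := by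
          apply mul_le_mul_of_nonneg_right hxy (rpow_nonneg hY.le p)
      _ = 2 * (y * Y ^ p) := by ring
      _ ≤ 2 * c := by linarith
  · calc y * X ^ p ≤ y * (2 * Y) ^ p := by
          apply mul_le_mul_of_nonneg_left (rpow_le_rpow hX.le hXY hp0.le) hy
      _ = 2 ^ p * (y * Y ^ p) := by rw [mul_rpow (by norm_num) hY.le]; ring
      _ ≤ 2 * c := by nlinarith [rpow_nonneg hY.le p, mul_nonneg hy (rpow_nonneg hY.le p)]
  · linarith


private theorem cross_ge_two (g d : ℝ) (hg : 0 < g) (hd : 0 < d) (h : 1 ≤ g * d) :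
    2 ≤ g + d := by nlinarith [sq_nonneg (g - d)]

private theorem lower_arith (t A B C : ℝ) (ht0 : 0 ≤ t) (ht1 : t ≤ 1)
    (hA : 1 ≤ A) (hB : 1 ≤ B) (hC : 2 ≤ C) :
    1 ≤ (1 - t) ^ 2 * A + t ^ 2 * B + t * (1 - t) * C := by
  nlinarith [mul_nonneg (sq_nonneg (1 - t)) (by linarith : (0:ℝ) ≤ A - 1),
    mul_nonneg (sq_nonneg t) (by linarith : (0:ℝ) ≤ B - 1),
    mul_nonneg (mul_nonneg ht0 (by linarith : (0:ℝ) ≤ 1 - t)) (by linarith : (0:ℝ) ≤ C - 2)]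

/-- Membership in the hyperbolic domain `Ω_c^r = {(w,v) ∈ (0,∞)² : 1 ≤ w v^{r-1} ≤ c}`. -/
noncomputable def memOmegaR (c r w v : ℝ) : Prop :=
  0 < w ∧ 0 < v ∧ 1 ≤ w * v ^ (r - 1) ∧ w * v ^ (r - 1) ≤ c

set_option maxHeartbeats 1000000 in
/-- If `P`, `Q` and their midpoint `R = (P+Q)/2` lie in `Ω_c^r`, then the line segment `PQ`
is contained in `Ω_{2c}^r`. -/
theorem segment_subset_omega_two_c (c r : ℝ) (hc : 1 < c) (hr1 : 1 < r) (hr2 : r ≤ 2)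
    (P Q : ℝ × ℝ)
    (hP : memOmegaR c r P.1 P.2) (hQ : memOmegaR c r Q.1 Q.2)
    (hR : memOmegaR c r ((P.1 + Q.1) / 2) ((P.2 + Q.2) / 2)) :
    ∀ t : ℝ, 0 ≤ t → t ≤ 1 →
      memOmegaR (2 * c) r ((1 - t) * P.1 + t * Q.1) ((1 - t) * P.2 + t * Q.2) := by
  intro t ht0 ht1
  obtain ⟨ha, hu, hPl, hPu⟩ := hP
  obtain ⟨hb, hv, hQl, hQu⟩ := hQ
  obtain ⟨hm1, hm2, hRl, hRu⟩ := hR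
  set a := P.1 with ha_def
  set u := P.2 with hu_def
  set b := Q.1 with hb_def
  set v := Q.2 with hv_def
  set p := r - 1 with hp_def
  have hp0 : 0 < p := by simp [hp_def]; linarith
  have hp1 : p ≤ 1 := by simp [hp_def]; linarith
  have ht0' : (0:ℝ) ≤ 1 - t := by linarith
  -- positivity of the point on the segment
  have hw : 0 < (1 - t) * a + t * b := by
    have h1 : min a b ≤ (1 - t) * a + t * b := by
      calc min a b = (1 - t) * min a b + t * min a b := by ring
        _ ≤ (1 - t) * a + t * b := by
            gcongr
            · exact min_le_left a b
            · exact min_le_right a b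
    exact lt_of_lt_of_le (lt_min ha hb) h1
  have hvt : 0 < (1 - t) * u + t * v := by
    have h1 : min u v ≤ (1 - t) * u + t * v := by
      calc min u v = (1 - t) * min u v + t * min u v := by ring
        _ ≤ (1 - t) * u + t * v := by
            gcongr
            · exact min_le_left u v
            · exact min_le_right u v
    exact lt_of_lt_of_le (lt_min hu hv) h1
  refine ⟨hw, hvt, ?_, ?_⟩
  · -- lower bound
    have hconc : (1 - t) * u ^ p + t * v ^ p ≤ ((1 - t) * u + t * v) ^ p := by
      have h := (Real.concaveOn_rpow hp0.le hp1).2 (Set.mem_Ici.2 hu.le)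
        (Set.mem_Ici.2 hv.le) ht0' ht0 (by ring)
      simpa [smul_eq_mul] using h
    have hstep : ((1 - t) * a + t * b) * ((1 - t) * u ^ p + t * v ^ p) ≤
        ((1 - t) * a + t * b) * ((1 - t) * u + t * v) ^ p :=
      mul_le_mul_of_nonneg_left hconc hw.le
    have hcross : 2 ≤ a * v ^ p + b * u ^ p := by
      have hγ : 0 < a * v ^ p := mul_pos ha (rpow_pos_of_pos hv p)
      have hδ : 0 < b * u ^ p := mul_pos hb (rpow_pos_of_pos hu p)
      have hprod : 1 ≤ (a * v ^ p) * (b * u ^ p) := by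
        have h := one_le_mul_of_one_le_of_one_le hPl hQl
        calc (1:ℝ) ≤ (a * u ^ p) * (b * v ^ p) := h
          _ = (a * v ^ p) * (b * u ^ p) := by ring
      exact cross_ge_two _ _ hγ hδ hprod
    have hexp : ((1 - t) * a + t * b) * ((1 - t) * u ^ p + t * v ^ p) =
        (1 - t) ^ 2 * (a * u ^ p) + t ^ 2 * (b * v ^ p)
          + t * (1 - t) * (a * v ^ p + b * u ^ p) := by ring
    have hfin : 1 ≤ ((1 - t) * a + t * b) * ((1 - t) * u ^ p + t * v ^ p) := by
      rw [hexp]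
      exact lower_arith t _ _ _ ht0 ht1 hPl hQl hcross
    linarith
  · -- upper bound
    have hc0 : 0 < c := by linarith
    have hm2' : 0 < (u + v) / 2 := by linarith
    rcases le_total t (1/2) with hth | hth
    · -- segment from P to midpoint
      have hw_le : (1 - t) * a + t * b ≤ max a ((a + b) / 2) := by
        rcases le_total a b with hab | hab
        · have h1 := le_max_right a ((a + b) / 2)
          linarith [mul_le_mul_of_nonneg_right hth (by linarith : (0:ℝ) ≤ b - a)]
        · have h1 := le_max_left a ((a + b) / 2)
          linarith [mul_nonneg ht0 (by linarith : (0:ℝ) ≤ a - b)]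
      have hv_le : (1 - t) * u + t * v ≤ max u ((u + v) / 2) := by
        rcases le_total u v with hab | hab
        · have h1 := le_max_right u ((u + v) / 2)
          linarith [mul_le_mul_of_nonneg_right hth (by linarith : (0:ℝ) ≤ v - u)]
        · have h1 := le_max_left u ((u + v) / 2)
          linarith [mul_nonneg ht0 (by linarith : (0:ℝ) ≤ u - v)]
      have key : max a ((a + b) / 2) * max u ((u + v) / 2) ^ p ≤ 2 * c :=
        maxmax_le p c a u ((a + b) / 2) ((u + v) / 2) hp0 hp1 hc0 hu
          (by linarith) hm2' hPu hRu (by linarith) (by linarith)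
      calc ((1 - t) * a + t * b) * ((1 - t) * u + t * v) ^ p
          ≤ max a ((a + b) / 2) * max u ((u + v) / 2) ^ p := by
            apply mul_le_mul hw_le (rpow_le_rpow hvt.le hv_le hp0.le)
              (rpow_nonneg hvt.le p) (le_trans ha.le (le_max_left _ _))
        _ ≤ 2 * c := key
    · -- segment from midpoint to Q
      have hw_le : (1 - t) * a + t * b ≤ max b ((a + b) / 2) := by
        rcases le_total a b with hab | hab
        · have h1 := le_max_left b ((a + b) / 2)
          linarith [mul_le_mul_of_nonneg_right ht1 (by linarith : (0:ℝ) ≤ b - a)]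
        · have h1 := le_max_right b ((a + b) / 2)
          linarith [mul_le_mul_of_nonneg_right hth (by linarith : (0:ℝ) ≤ a - b)]
      have hv_le : (1 - t) * u + t * v ≤ max v ((u + v) / 2) := by
        rcases le_total u v with hab | hab
        · have h1 := le_max_left v ((u + v) / 2)
          linarith [mul_le_mul_of_nonneg_right ht1 (by linarith : (0:ℝ) ≤ v - u)]
        · have h1 := le_max_right v ((u + v) / 2)
          linarith [mul_le_mul_of_nonneg_right hth (by linarith : (0:ℝ) ≤ u - v)]
      have key : max b ((a + b) / 2) * max v ((u + v) / 2) ^ p ≤ 2 * c :=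
        maxmax_le p c b v ((a + b) / 2) ((u + v) / 2) hp0 hp1 hc0 hv
          (by linarith) hm2' hQu hRu (by linarith) (by linarith)
      calc ((1 - t) * a + t * b) * ((1 - t) * u + t * v) ^ p
          ≤ max b ((a + b) / 2) * max v ((u + v) / 2) ^ p := by
            apply mul_le_mul hw_le (rpow_le_rpow hvt.le hv_le hp0.le)
              (rpow_nonneg hvt.le p) (le_trans hb.le (le_max_left _ _))
        _ ≤ 2 * c := key
end
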